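/- Let n and m be positive integers with n/2 ≤ m < n, and let λ be a partition of n with λ_1 ≤ m. Then the expected major index of a uniformly random standard Young tableau of shape λ satisfies E_λ[maj] ≥ (1/2)·[C(n,2) − C(m,2) − C(n−m,2)], where C(a,2) = a(a−1)/2. -/

import Mathlib

open scoped BigOperators

/-- A standard Young tableau of shape `Y` (a Young diagram with `Y.card = n`):
a bijective filling of the cells of `Y` by the numbers `1, …, n`, strictly increasing
along each row (left to right) and down each column.  Entries outside the
diagram are `0`. -/
structure SYT (Y : YoungDiagram) where
  entry : ℕ → ℕ → ℕ
  bijOn : Set.BijOn (fun c : ℕ × ℕ => entry c.1 c.2) ↑Y.cells (Set.Icc 1 Y.card)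
  row_strict : ∀ ⦃i j1 j2 : ℕ⦄, j1 < j2 → (i, j2) ∈ Y → entry i j1 < entry i j2
  col_strict : ∀ ⦃i1 i2 j : ℕ⦄, i1 < i2 → (i2, j) ∈ Y → entry i1 j < entry i2 j
  zeros : ∀ ⦃i j : ℕ⦄, (i, j) ∉ Y → entry i j = 0

namespace SYT

variable {Y : YoungDiagram}

/-- `i` is a descent of `T` : the entry `i + 1` lies in a strictly lower row
than the entry `i`. -/
def IsDescent (T : SYT Y) (i : ℕ) : Prop :=
  ∃ c ∈ Y.cells, ∃ c' ∈ Y.cells,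
    T.entry c.1 c.2 = i ∧ T.entry c'.1 c'.2 = i + 1 ∧ c.1 < c'.1

open Classical in
/-- The descent set `D(T)` of a standard Young tableau, as a finset.
(Descents necessarily lie in `{1, …, n - 1}` ⊆ `range n`.) -/
noncomputable def descents (T : SYT Y) : Finset ℕ :=
  (Finset.range Y.card).filter fun i => T.IsDescent i

/-- The major index `maj(T) = ∑_{i ∈ D(T)} i`. -/
noncomputable def maj (T : SYT Y) : ℕ :=
  ∑ i ∈ T.descents, i

/-- The descent function `d_f(T) = ∑_{i ∈ D(T)} f(i)`. -/
noncomputable def dfun (f : ℕ → ℝ) (T : SYT Y) : ℝ :=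
  ∑ i ∈ T.descents, f i

end SYT

/-- Expectation of a statistic `g` over uniformly random standard Young tableaux
of shape `Y` : `E_λ[g] = (1/f^λ) ∑_T g(T)`. -/
noncomputable def sytExpect (Y : YoungDiagram) (g : SYT Y → ℝ) : ℝ :=
  (∑ᶠ T : SYT Y, g T) / (Nat.card (SYT Y) : ℝ)

/-- Variance of a statistic `g` : `Var_λ[g] = E_λ[g²] − (E_λ[g])²`. -/
noncomputable def sytVar (Y : YoungDiagram) (g : SYT Y → ℝ) : ℝ :=
  sytExpect Y (fun T => (g T) ^ 2) - (sytExpect Y g) ^ 2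

/-- Probability of an event `P` for a uniformly random standard Young tableau of shape `Y`. -/
noncomputable def sytProb (Y : YoungDiagram) (P : SYT Y → Prop) : ℝ :=
  (Nat.card {T : SYT Y // P T} : ℝ) / (Nat.card (SYT Y) : ℝ)

/-- The constant `c(λ) = [C(n,2) − Σ_i C(λ_i,2) + Σ_j C(λ'_j,2)] / (n(n−1))`.
Rows and columns are 0-indexed; since `Y` has at most `Y.card` nonempty rows and
columns, the sums over `range Y.card` capture all nonzero terms. -/
noncomputable def cpar (Y : YoungDiagram) : ℝ :=
  ((Y.card.choose 2 : ℝ) - ∑ i ∈ Finset.range Y.card, ((Y.rowLen i).choose 2 : ℝ)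
      + ∑ j ∈ Finset.range Y.card, ((Y.colLen j).choose 2 : ℝ))
    / ((Y.card : ℝ) * ((Y.card : ℝ) - 1))

/-- The hook length of the cell `c = (i, j)` (0-indexed):
`h_{ij} = λ_{i+1} + λ'_{j+1} − (i+1) − (j+1) + 1 = rowLen i + colLen j − i − j − 1`. -/
def hookLen (Y : YoungDiagram) (c : ℕ × ℕ) : ℕ :=
  Y.rowLen c.1 + Y.colLen c.2 - c.1 - c.2 - 1

/-!
The expected major index is `E_λ[maj] = (C(n,2) - Σ_c content(c)) / 2`, which reduces the
theorem to a bound on the total content.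

For `1 ≤ u < n` let `ε_u(T)` be `1` if `u + 1` lies just right of `u`, `-1` if just below, and
`0` otherwise. Exchanging the entries `u` and `u + 1` is an involution on the tableaux in which
they are not adjacent; it negates the content step `c(u + 1) - c(u)` and toggles whether `u` is a
descent. Hence `Σ_T (c_T(u + 1) - c_T(u)) = Σ_T ε_u(T)`, and `u` is a descent of exactly
`(f^λ - Σ_T ε_u(T)) / 2` tableaux. A case analysis of the cells of `u, u + 1, u + 2`, using the
exchanges of `u, u + 1` and of `u + 1, u + 2`, shows that `E = Σ_T ε_u(T)` does not depend on `u`.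
Abel summation of the content steps gives `f^λ Σ_c content(c) = E · C(n,2)`, while
`Σ_T maj(T) = C(n,2) (f^λ - E) / 2`; eliminating `E` gives the formula for `E_λ[maj]`.

Finally `2 Σ_c content(c) ≤ Σ_i λ_i (λ_i - 1)`, and since every `λ_i ≤ λ_1 ≤ m` and
`Σ_i λ_i = n`, convexity bounds `Σ_i λ_i²` by `m² + (n - m)²`.
-/

open Classical Finset

def cellContent (c : ℕ × ℕ) : ℤ := c.2 - c.1

def YoungDiagram.contentSum (Y : YoungDiagram) : ℤ := ∑ c ∈ Y.cells, cellContent c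

theorem Prod.nat_covBy_iff {p q : ℕ × ℕ} : p ⋖ q ↔ q = (p.1 + 1, p.2) ∨ q = (p.1, p.2 + 1) := by
  obtain ⟨p1, p2⟩ := p
  obtain ⟨q1, q2⟩ := q
  simp only [Prod.mk_covBy_mk_iff, Nat.covBy_iff_add_one_eq, Prod.mk.injEq]
  omega

theorem cellContent_add_cellContent_of_covBy {p q r : ℕ × ℕ} (hq : p ⋖ q) (hr : p ⋖ r)
    (hqr : q ≠ r) : cellContent q + cellContent r = 2 * cellContent p := by
  obtain ⟨p1, p2⟩ := p
  obtain ⟨q1, q2⟩ := q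
  obtain ⟨r1, r2⟩ := r
  simp only [Prod.nat_covBy_iff, Prod.mk.injEq, ne_eq] at hq hr hqr
  simp only [cellContent]
  omega

theorem cellContent_add_cellContent_of_covBy' {p q r : ℕ × ℕ} (hp : p ⋖ r) (hq : q ⋖ r)
    (hpq : p ≠ q) : cellContent p + cellContent q = 2 * cellContent r := by
  obtain ⟨p1, p2⟩ := p
  obtain ⟨q1, q2⟩ := q
  obtain ⟨r1, r2⟩ := r
  simp only [Prod.nat_covBy_iff, Prod.mk.injEq, ne_eq] at hp hq hpq
  simp only [cellContent]
  omega

/-- Unequal content steps mean that the path `p, q, r` turns a corner; the witness is the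
opposite corner of the unit square. -/
theorem exists_lt_lt_of_covBy_covBy {p q r : ℕ × ℕ} (hpq : p ⋖ q) (hqr : q ⋖ r)
    (h : cellContent q - cellContent p ≠ cellContent r - cellContent q) :
    ∃ x, p < x ∧ x < r ∧ x ≠ q := by
  obtain ⟨p1, p2⟩ := p
  obtain ⟨q1, q2⟩ := q
  obtain ⟨r1, r2⟩ := r
  simp only [Prod.nat_covBy_iff, Prod.mk.injEq, cellContent] at hpq hqr h
  refine ⟨(p1 + r1 - q1, p2 + r2 - q2), ?_, ?_, ?_⟩
  · simp only [Prod.lt_iff]; omega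
  · simp only [Prod.lt_iff]; omega
  · simp only [ne_eq, Prod.mk.injEq]; omega

theorem Equiv.swap_add_one_lt_swap_add_one {u a b : ℕ} (hab : a < b)
    (h : ¬(a = u ∧ b = u + 1)) : Equiv.swap u (u + 1) a < Equiv.swap u (u + 1) b := by
  simp only [Equiv.swap_apply_def]
  split_ifs <;> omega

theorem Finset.sum_eq_zero_of_neg_involution {ι : Type*} {s : Finset ι} {g : ι → ℤ} (σ : ι → ι)
    (hσ : ∀ i, σ (σ i) = i) (h : ∀ i ∈ s, σ i ∈ s ∧ g (σ i) = -g i) : ∑ i ∈ s, g i = 0 := by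
  refine sum_involution (fun i _ => σ i) (fun i hi => by rw [(h i hi).2]; ring)
    (fun i hi hne he => hne ?_) (fun i hi => (h i hi).1) fun i _ => hσ i
  have := (h i hi).2
  rw [he] at this
  omega

theorem sum_range_sub_mul_sub (g : ℕ → ℤ) (k : ℕ) :
    ∑ i ∈ range k, ((k : ℤ) - i) * (g (i + 1) - g i) = ∑ i ∈ range k, g (i + 1) - k * g 0 := by
  induction k with
  | zero => simp
  | succ k ih =>
    have h : ∀ i ∈ range (k + 1), (((k + 1 : ℕ) : ℤ) - i) * (g (i + 1) - g i) =
        ((k : ℤ) - i) * (g (i + 1) - g i) + (g (i + 1) - g i) := fun i _ => by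
      rw [Nat.cast_succ]
      ring
    rw [sum_congr rfl h, sum_add_distrib, sum_range_sub,
      sum_range_succ (fun i => ((k : ℤ) - i) * _), ih, sum_range_succ, Nat.cast_succ]
    ring

theorem two_mul_sum_range (n : ℕ) : 2 * ∑ u ∈ range n, (u : ℤ) = n * (n - 1) := by
  induction n with
  | zero => simp
  | succ n ih =>
    rw [sum_range_succ, mul_add, ih, Nat.cast_succ]
    ring

theorem two_mul_sum_range_pred (n : ℕ) :
    2 * ∑ i ∈ range (n - 1), ((n : ℤ) - 1 - i) = n * (n - 1) := by
  rcases n with _ | k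
  · simp
  · simp only [Nat.add_sub_cancel, Nat.cast_succ, add_sub_cancel_right, sum_sub_distrib,
      sum_const, card_range, nsmul_eq_mul]
    linear_combination -two_mul_sum_range k

theorem Finset.sum_sq_le_sq_add_sq {ι : Type*} {s : Finset ι} {x : ι → ℤ} {i₀ : ι} {m : ℤ}
    (hi₀ : i₀ ∈ s) (hx : ∀ i ∈ s, 0 ≤ x i ∧ x i ≤ x i₀) (hm : x i₀ ≤ m) :
    ∑ i ∈ s, x i ^ 2 ≤ m ^ 2 + (∑ i ∈ s, x i - m) ^ 2 := by
  set a := x i₀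
  set B := ∑ i ∈ s.erase i₀, x i
  have hB : 0 ≤ B := sum_nonneg fun i hi => (hx i (mem_of_mem_erase hi)).1
  have hrest : ∀ c, (∀ i ∈ s.erase i₀, x i ≤ c) → ∑ i ∈ s.erase i₀, x i ^ 2 ≤ c * B :=
    fun c hc => by
      rw [mul_sum]
      refine sum_le_sum fun i hi => ?_
      nlinarith [(hx i (mem_of_mem_erase hi)).1, hc i hi]
  have h₁ := hrest a fun i hi => (hx i (mem_of_mem_erase hi)).2
  have h₂ := hrest B fun i hi => single_le_sum (fun j hj => (hx j (mem_of_mem_erase hj)).1) hi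
  rw [← add_sum_erase s _ hi₀, ← add_sum_erase s _ hi₀]
  rcases le_total B a with hBa | haB
  · nlinarith [mul_nonneg (sub_nonneg.2 hm) (sub_nonneg.2 (hBa.trans hm))]
  · nlinarith [sq_nonneg (2 * m - a - B),
      mul_nonneg (add_nonneg (hx i₀ hi₀).1 hB) (sub_nonneg.2 haB)]

theorem YoungDiagram.sum_cells_eq_sum_rows {M : Type*} [AddCommMonoid M] (Y : YoungDiagram)
    {K : ℕ} (hK : Y.colLen 0 ≤ K) (g : ℕ × ℕ → M) :
    ∑ c ∈ Y.cells, g c = ∑ i ∈ range K, ∑ j ∈ range (Y.rowLen i), g (i, j) := by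
  rw [← sum_fiberwise_of_maps_to (g := Prod.fst) (t := range K) fun c hc => ?_]
  · refine sum_congr rfl fun i _ => ?_
    change ∑ c ∈ Y.row i, g c = _
    rw [YoungDiagram.row_eq_prod, sum_product, sum_singleton]
  · have := Y.colLen_anti 0 c.2 (Nat.zero_le _)
    have := YoungDiagram.mem_iff_lt_colLen.1 hc
    rw [mem_range]
    omega

theorem YoungDiagram.two_mul_contentSum_le (Y : YoungDiagram) {m : ℕ} (hrow : Y.rowLen 0 ≤ m) :
    2 * Y.contentSum ≤ m * ((m : ℤ) - 1) + ((Y.card : ℤ) - m) * ((Y.card : ℤ) - m - 1) := by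
  have hK : Y.colLen 0 ≤ Y.card + 1 := by
    rw [Y.colLen_eq_card]
    exact (card_le_card (filter_subset _ _)).trans (Nat.le_succ _)
  have hcard : (Y.card : ℤ) = ∑ i ∈ range (Y.card + 1), (Y.rowLen i : ℤ) := by
    simpa using Y.sum_cells_eq_sum_rows hK fun _ => (1 : ℤ)
  have hrows :
      2 * Y.contentSum ≤ ∑ i ∈ range (Y.card + 1), ((Y.rowLen i : ℤ) ^ 2 - Y.rowLen i) := by
    rw [contentSum, Y.sum_cells_eq_sum_rows hK, mul_sum]
    refine sum_le_sum fun i _ => ?_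
    have hle : ∑ j ∈ range (Y.rowLen i), cellContent (i, j) ≤ ∑ j ∈ range (Y.rowLen i), (j : ℤ) :=
      sum_le_sum fun j _ => by simp [cellContent]
    nlinarith [two_mul_sum_range (Y.rowLen i)]
  have hsq := sum_sq_le_sq_add_sq (x := fun i => (Y.rowLen i : ℤ))
    (mem_range.2 (Nat.succ_pos Y.card))
    (fun i _ => ⟨Nat.cast_nonneg _, by exact_mod_cast Y.rowLen_anti 0 i (Nat.zero_le i)⟩)
    (show (Y.rowLen 0 : ℤ) ≤ m by exact_mod_cast hrow)
  rw [sum_sub_distrib, ← hcard] at hrows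
  rw [← hcard] at hsq
  nlinarith

namespace SYT

variable {Y : YoungDiagram}

theorem ext_of_entry {T T' : SYT Y} (h : T.entry = T'.entry) : T = T' := by
  cases T; cases T'; simpa using h

def ofStrictMonoOn (f : ℕ × ℕ → ℕ) (hbij : Set.BijOn f ↑Y.cells (Set.Icc 1 Y.card))
    (hmono : StrictMonoOn f ↑Y.cells) (hzero : ∀ c ∉ Y, f c = 0) : SYT Y where
  entry i j := f (i, j)
  bijOn := hbij
  row_strict _ _ _ hj h₂ :=
    hmono (Y.up_left_mem le_rfl hj.le h₂) h₂ (Prod.mk_lt_mk_iff_right.2 hj)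
  col_strict _ _ _ hi h₂ :=
    hmono (Y.up_left_mem hi.le le_rfl h₂) h₂ (Prod.mk_lt_mk_iff_left.2 hi)
  zeros _ _ h := hzero _ h

instance : Nonempty (SYT Y) := by
  let s : Finset (ℕ ×ₗ ℕ) := Y.cells.map toLex.toEmbedding
  have hs : ∀ c, toLex c ∈ s ↔ c ∈ Y := by simp [s]
  let e := s.orderIsoOfFin (k := Y.card) (by simp [s, YoungDiagram.card])
  let rank : ℕ × ℕ → ℕ := fun c => if h : c ∈ Y then (e.symm ⟨toLex c, (hs c).2 h⟩ : ℕ) + 1 else 0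
  have rank_of_mem : ∀ {c} (h : c ∈ Y), rank c = (e.symm ⟨toLex c, (hs c).2 h⟩ : ℕ) + 1 :=
    fun h => dif_pos h
  refine ⟨ofStrictMonoOn rank ⟨?_, ?_, ?_⟩ ?_ fun c h => dif_neg h⟩
  · intro c hc
    rw [rank_of_mem hc]
    exact ⟨by omega, (e.symm _).isLt⟩
  · intro c hc c' hc' h
    rw [rank_of_mem hc, rank_of_mem hc', add_left_inj, Fin.val_inj, e.symm.apply_eq_iff_eq] at h
    simpa using h
  · intro v hv
    obtain ⟨⟨x, hx⟩, hxv⟩ := e.symm.surjective ⟨v - 1, by have := hv.1; have := hv.2; omega⟩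
    have hx' : ofLex x ∈ Y := (hs _).1 hx
    refine ⟨ofLex x, hx', ?_⟩
    simp only [rank_of_mem hx', toLex_ofLex, hxv]
    have := hv.1
    omega
  · intro c hc c' hc' h
    rw [rank_of_mem hc, rank_of_mem hc', add_lt_add_iff_right, Fin.val_fin_lt,
      e.symm.lt_iff_lt, Subtype.mk_lt_mk]
    exact Prod.Lex.toLex_strictMono h

instance : Finite (SYT Y) := by
  refine Finite.of_injective (fun (T : SYT Y) (c : Y.cells) =>
    (⟨T.entry c.1.1 c.1.2, T.bijOn.mapsTo c.2⟩ : Set.Icc 1 Y.card)) fun T T' h => ?_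
  refine ext_of_entry (funext₂ fun i j => ?_)
  by_cases hij : (i, j) ∈ Y
  · simpa using congrFun h ⟨(i, j), hij⟩
  · rw [T.zeros hij, T'.zeros hij]

noncomputable instance : Fintype (SYT Y) := Fintype.ofFinite _

variable (T : SYT Y) {a b u v : ℕ}

/-- The cell containing the value `v`; meaningful for `v ∈ [1, n]` only. -/
noncomputable def cell (v : ℕ) : ℕ × ℕ :=
  Function.invFunOn (fun c : ℕ × ℕ => T.entry c.1 c.2) Y.cells v

theorem cell_mem (hv : v ∈ Set.Icc 1 Y.card) : T.cell v ∈ Y :=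
  T.bijOn.surjOn.mapsTo_invFunOn hv

theorem entry_cell (hv : v ∈ Set.Icc 1 Y.card) : T.entry (T.cell v).1 (T.cell v).2 = v :=
  T.bijOn.surjOn.rightInvOn_invFunOn hv

theorem cell_entry {c : ℕ × ℕ} (hc : c ∈ Y) : T.cell (T.entry c.1 c.2) = c :=
  T.bijOn.injOn.leftInvOn_invFunOn hc

theorem cell_injOn : Set.InjOn T.cell (Set.Icc 1 Y.card) := fun a ha b hb h => by
  rw [← T.entry_cell ha, h, T.entry_cell hb]

theorem cell_ne (ha : a ∈ Set.Icc 1 Y.card) (hb : b ∈ Set.Icc 1 Y.card) (hab : a ≠ b) :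
    T.cell a ≠ T.cell b :=
  fun h => hab (T.cell_injOn ha hb h)

theorem strictMonoOn : StrictMonoOn (fun c : ℕ × ℕ => T.entry c.1 c.2) ↑Y.cells := by
  intro c _ c' hc' h
  have hrow : ∀ {i j j'}, j ≤ j' → (i, j') ∈ Y → T.entry i j ≤ T.entry i j' := fun hj h' =>
    hj.eq_or_lt.elim (fun e => e ▸ le_rfl) fun hj => (T.row_strict hj h').le
  have hcol : ∀ {i i' j}, i ≤ i' → (i', j) ∈ Y → T.entry i j ≤ T.entry i' j := fun hi h' =>
    hi.eq_or_lt.elim (fun e => e ▸ le_rfl) fun hi => (T.col_strict hi h').le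
  have hmid : (c.1, c'.2) ∈ Y := Y.up_left_mem h.le.1 le_rfl hc'
  rcases Prod.lt_iff.1 h with ⟨h1, h2⟩ | ⟨h1, h2⟩
  · exact (hrow h2 hmid).trans_lt (T.col_strict h1 hc')
  · exact (T.row_strict h2 hmid).trans_le (hcol h1 hc')

theorem lt_of_cell_lt (ha : a ∈ Set.Icc 1 Y.card) (hb : b ∈ Set.Icc 1 Y.card)
    (h : T.cell a < T.cell b) : a < b := by
  simpa only [T.entry_cell ha, T.entry_cell hb] using
    T.strictMonoOn (T.cell_mem ha) (T.cell_mem hb) h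

theorem le_of_cell_le (ha : a ∈ Set.Icc 1 Y.card) (hb : b ∈ Set.Icc 1 Y.card)
    (h : T.cell a ≤ T.cell b) : a ≤ b :=
  h.lt_or_eq.elim (fun h => (T.lt_of_cell_lt ha hb h).le) fun h => (T.cell_injOn ha hb h).le

theorem not_cell_lt_of_lt (ha : a ∈ Set.Icc 1 Y.card) (hb : b ∈ Set.Icc 1 Y.card)
    (hab : a < b) : ¬T.cell b < T.cell a :=
  fun h => (T.lt_of_cell_lt hb ha h).not_gt hab

theorem entry_mem_Ioo (ha : a ∈ Set.Icc 1 Y.card) (hb : b ∈ Set.Icc 1 Y.card)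
    {x : ℕ × ℕ} (hax : T.cell a < x) (hxb : x < T.cell b) : T.entry x.1 x.2 ∈ Set.Ioo a b := by
  have hx : x ∈ Y := Y.isLowerSet hxb.le (T.cell_mem hb)
  constructor
  · simpa only [T.entry_cell ha] using T.strictMonoOn (T.cell_mem ha) hx hax
  · simpa only [T.entry_cell hb] using T.strictMonoOn hx (T.cell_mem hb) hxb

theorem eq_cell_succ_of_lt_of_lt (hu : 1 ≤ u) (hn : u + 2 ≤ Y.card) {x : ℕ × ℕ}
    (hux : T.cell u < x) (hxu : x < T.cell (u + 2)) : x = T.cell (u + 1) := by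
  have hx := T.entry_mem_Ioo ⟨hu, by omega⟩ ⟨by omega, hn⟩ hux hxu
  have hx' : T.entry x.1 x.2 = u + 1 := by simp only [Set.mem_Ioo] at hx; omega
  rw [← hx', T.cell_entry (Y.isLowerSet hxu.le (T.cell_mem ⟨by omega, hn⟩))]

theorem cell_one (h : 1 ≤ Y.card) : T.cell 1 = (0, 0) := by
  have h₁ : (1 : ℕ) ∈ Set.Icc 1 Y.card := ⟨le_rfl, h⟩
  have hle : ((0 : ℕ), (0 : ℕ)) ≤ T.cell 1 := Prod.mk_le_mk.2 ⟨Nat.zero_le _, Nat.zero_le _⟩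
  have h₀ : ((0 : ℕ), (0 : ℕ)) ∈ Y := Y.isLowerSet hle (T.cell_mem h₁)
  by_contra hne
  have hlt := T.strictMonoOn h₀ (T.cell_mem h₁) (hle.lt_of_ne (Ne.symm hne))
  have : 1 ≤ T.entry 0 0 := (T.bijOn.mapsTo h₀).1
  simp only [T.entry_cell h₁] at hlt
  omega

def Adj (a b : ℕ) : Prop := T.cell a ⋖ T.cell b

theorem adj_succ_iff (hu : 1 ≤ u) (hn : u + 1 ≤ Y.card) :
    T.Adj u (u + 1) ↔ T.cell u < T.cell (u + 1) := by
  refine ⟨CovBy.lt, fun h => ⟨h, fun x hux hxu => ?_⟩⟩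
  have := T.entry_mem_Ioo ⟨hu, by omega⟩ ⟨by omega, hn⟩ hux hxu
  simp only [Set.mem_Ioo] at this
  omega

theorem not_adj_of_lt (ha : a ∈ Set.Icc 1 Y.card) (hb : b ∈ Set.Icc 1 Y.card) (hab : a < b) :
    ¬T.Adj b a :=
  fun h => T.not_cell_lt_of_lt ha hb hab h.lt

noncomputable def contentStep (u : ℕ) : ℤ := cellContent (T.cell (u + 1)) - cellContent (T.cell u)

/-- `ε_u(T)`: `1` if `u + 1` lies just right of `u`, `-1` if just below, and `0` otherwise. -/
noncomputable def adjStep (u : ℕ) : ℤ := if T.Adj u (u + 1) then T.contentStep u else 0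

/-- As `u + 1` never lies weakly above-left of `u`, this says that their cells are incomparable,
i.e. that exchanging `u` and `u + 1` keeps the tableau standard. -/
def Swappable (u : ℕ) : Prop :=
  1 ≤ u ∧ u + 1 ≤ Y.card ∧ ¬T.cell u < T.cell (u + 1)

variable {T}

theorem Swappable.mem_Icc (h : T.Swappable u) : u ∈ Set.Icc 1 Y.card :=
  ⟨h.1, by have := h.2.1; omega⟩

theorem Swappable.succ_mem_Icc (h : T.Swappable u) : u + 1 ∈ Set.Icc 1 Y.card :=
  ⟨by omega, h.2.1⟩

theorem Swappable.not_adj (h : T.Swappable u) : ¬T.Adj u (u + 1) :=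
  fun h' => h.2.2 h'.lt

theorem swappable_of_not_adj (hu : 1 ≤ u) (hn : u + 1 ≤ Y.card) (h : ¬T.Adj u (u + 1)) :
    T.Swappable u :=
  ⟨hu, hn, fun h' => h ((T.adj_succ_iff hu hn).2 h')⟩

theorem adj_of_not_swappable (hu : 1 ≤ u) (hn : u + 1 ≤ Y.card) (h : ¬T.Swappable u) :
    T.Adj u (u + 1) :=
  not_not.1 fun h' => h (swappable_of_not_adj hu hn h')

theorem Swappable.fst_ne (h : T.Swappable u) : (T.cell u).1 ≠ (T.cell (u + 1)).1 := by
  intro he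
  rcases le_total (T.cell u).2 (T.cell (u + 1)).2 with h2 | h2
  · refine h.2.2 (lt_of_le_of_ne ⟨he.le, h2⟩ (T.cell_ne h.mem_Icc h.succ_mem_Icc (by omega)))
  · have := T.le_of_cell_le h.succ_mem_Icc h.mem_Icc ⟨he.ge, h2⟩
    omega

variable (T)

noncomputable def swap (u : ℕ) : SYT Y :=
  if h : T.Swappable u then
    ofStrictMonoOn (fun c => Equiv.swap u (u + 1) (T.entry c.1 c.2))
      ((Equiv.bijOn_swap h.mem_Icc h.succ_mem_Icc).comp T.bijOn)
      (fun c hc c' hc' hcc' => Equiv.swap_add_one_lt_swap_add_one (T.strictMonoOn hc hc' hcc')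
        fun ⟨hcu, hcu'⟩ => h.2.2 (by rwa [← hcu', ← hcu, T.cell_entry hc, T.cell_entry hc']))
      (fun c hc => by
        have := h.1
        rw [T.zeros hc, Equiv.swap_apply_of_ne_of_ne] <;> omega)
  else T

variable {T}

theorem swap_of_not_swappable (h : ¬T.Swappable u) : T.swap u = T := dif_neg h

theorem entry_swap (h : T.Swappable u) (i j : ℕ) :
    (T.swap u).entry i j = Equiv.swap u (u + 1) (T.entry i j) := by
  rw [swap, dif_pos h]
  rfl

theorem cell_swap (h : T.Swappable u) (hv : v ∈ Set.Icc 1 Y.card) :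
    (T.swap u).cell v = T.cell (Equiv.swap u (u + 1) v) := by
  have hv' := (Equiv.bijOn_swap h.mem_Icc h.succ_mem_Icc).mapsTo hv
  conv_lhs => rw [← Equiv.swap_apply_self u (u + 1) v, ← T.entry_cell hv', ← entry_swap h]
  exact (T.swap u).cell_entry (T.cell_mem hv')

theorem cell_swap_self (h : T.Swappable u) : (T.swap u).cell u = T.cell (u + 1) := by
  rw [cell_swap h h.mem_Icc, Equiv.swap_apply_left]

theorem cell_swap_succ (h : T.Swappable u) : (T.swap u).cell (u + 1) = T.cell u := by
  rw [cell_swap h h.succ_mem_Icc, Equiv.swap_apply_right]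

theorem cell_swap_of_ne (h : T.Swappable u) (hv : v ∈ Set.Icc 1 Y.card) (hvu : v ≠ u)
    (hvu' : v ≠ u + 1) : (T.swap u).cell v = T.cell v := by
  rw [cell_swap h hv, Equiv.swap_apply_of_ne_of_ne hvu hvu']

theorem cell_swap_add_two (h : T.Swappable u) (hn : u + 2 ≤ Y.card) :
    (T.swap u).cell (u + 2) = T.cell (u + 2) :=
  cell_swap_of_ne h ⟨by omega, hn⟩ (by omega) (by omega)

theorem cell_swap_succ_left (h : T.Swappable (u + 1)) (hu : 1 ≤ u) :
    (T.swap (u + 1)).cell u = T.cell u :=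
  cell_swap_of_ne h ⟨hu, by have := h.2.1; omega⟩ (by omega) (by omega)

theorem cell_swap_succ_add_two (h : T.Swappable (u + 1)) :
    (T.swap (u + 1)).cell (u + 2) = T.cell (u + 1) :=
  cell_swap_succ h

theorem swappable_swap (h : T.Swappable u) : (T.swap u).Swappable u := by
  refine ⟨h.1, h.2.1, ?_⟩
  rw [cell_swap_self h, cell_swap_succ h]
  exact T.not_cell_lt_of_lt h.mem_Icc h.succ_mem_Icc (by omega)

theorem swap_swap (T : SYT Y) (u : ℕ) : (T.swap u).swap u = T := by
  by_cases h : T.Swappable u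
  · refine ext_of_entry (funext₂ fun i j => ?_)
    rw [entry_swap (swappable_swap h), entry_swap h, Equiv.swap_apply_self]
  · rw [swap_of_not_swappable h, swap_of_not_swappable h]

theorem swap_involutive (u : ℕ) : Function.Involutive fun T : SYT Y => T.swap u :=
  fun T => T.swap_swap u

theorem sum_swap (g : SYT Y → ℤ) (u : ℕ) : ∑ T : SYT Y, g (T.swap u) = ∑ T, g T :=
  (swap_involutive u).bijective.sum_comp g

theorem contentStep_add_contentStep_swap (hu : 1 ≤ u) (hn : u + 1 ≤ Y.card) :
    T.contentStep u + (T.swap u).contentStep u = 2 * T.adjStep u := by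
  by_cases h : T.Swappable u
  · rw [adjStep, if_neg h.not_adj, contentStep, contentStep, cell_swap_self h, cell_swap_succ h]
    ring
  · rw [swap_of_not_swappable h, adjStep, if_pos (adj_of_not_swappable hu hn h)]
    ring

theorem sum_contentStep (hu : 1 ≤ u) (hn : u + 1 ≤ Y.card) :
    ∑ T : SYT Y, T.contentStep u = ∑ T : SYT Y, T.adjStep u := by
  have h := Fintype.sum_congr _ _ fun T : SYT Y => T.contentStep_add_contentStep_swap hu hn
  rw [sum_add_distrib, sum_swap (fun T => T.contentStep u), ← mul_sum] at h
  linarith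

theorem isDescent_iff (hu : 1 ≤ u) (hn : u + 1 ≤ Y.card) :
    T.IsDescent u ↔ (T.cell u).1 < (T.cell (u + 1)).1 := by
  have hu₀ : u ∈ Set.Icc 1 Y.card := ⟨hu, by omega⟩
  have hu₁ : u + 1 ∈ Set.Icc 1 Y.card := ⟨by omega, hn⟩
  constructor
  · rintro ⟨c, hc, c', hc', rfl, he', hlt⟩
    rwa [T.cell_entry hc, ← he', T.cell_entry hc']
  · exact fun h => ⟨_, T.cell_mem hu₀, _, T.cell_mem hu₁, T.entry_cell hu₀, T.entry_cell hu₁, h⟩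

theorem descent_add_descent_swap (hu : 1 ≤ u) (hn : u + 1 ≤ Y.card) :
    ((if T.IsDescent u then 1 else 0) + if (T.swap u).IsDescent u then 1 else 0 : ℤ) =
      1 - T.adjStep u := by
  rw [T.isDescent_iff hu hn, (T.swap u).isDescent_iff hu hn]
  by_cases h : T.Swappable u
  · rw [cell_swap_self h, cell_swap_succ h, adjStep, if_neg h.not_adj]
    have := h.fst_ne
    split_ifs <;> omega
  · have hc := adj_of_not_swappable hu hn h
    rw [swap_of_not_swappable h, adjStep, if_pos hc, contentStep]
    rcases Prod.nat_covBy_iff.1 hc with h' | h' <;> simp [h', cellContent]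

theorem card_isDescent (hu : 1 ≤ u) (hn : u + 1 ≤ Y.card) :
    2 * (#{T : SYT Y | T.IsDescent u} : ℤ) = Fintype.card (SYT Y) - ∑ T : SYT Y, T.adjStep u := by
  have h := Fintype.sum_congr _ _ fun T : SYT Y => T.descent_add_descent_swap hu hn
  rw [sum_add_distrib, sum_swap (fun T => if T.IsDescent u then 1 else 0), sum_sub_distrib] at h
  simp only [sum_boole, sum_const, card_univ, nsmul_eq_mul, mul_one] at h
  linarith

theorem contentStep_succ_eq (hu : 1 ≤ u) (hn : u + 2 ≤ Y.card) (h₁ : T.Adj u (u + 1))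
    (h₂ : T.Adj (u + 1) (u + 2)) : T.contentStep (u + 1) = T.contentStep u := by
  by_contra h
  obtain ⟨x, hpx, hxr, hxq⟩ := exists_lt_lt_of_covBy_covBy h₁ h₂ (Ne.symm h)
  exact hxq (T.eq_cell_succ_of_lt_of_lt hu hn hpx hxr)

/-- Here `u + 1` and `u + 2` fill the two cells covering `u`, and exchanging them negates the
content step. -/
theorem sum_contentStep_fork (hu : 1 ≤ u) (hn : u + 2 ≤ Y.card) :
    ∑ T : SYT Y with T.Adj u (u + 1) ∧ ¬T.Adj (u + 1) (u + 2) ∧ T.Adj u (u + 2),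
      T.contentStep u = 0 := by
  refine sum_eq_zero_of_neg_involution (fun T => T.swap (u + 1)) (swap_swap · _) fun T hT => ?_
  obtain ⟨hP, hQ, hR⟩ := (mem_filter.1 hT).2
  have hs := swappable_of_not_adj (by omega) hn hQ
  have hqr := T.cell_ne ⟨by omega, by omega⟩ ⟨by omega, hn⟩ (show u + 1 ≠ u + 2 by omega)
  have := cellContent_add_cellContent_of_covBy hP hR hqr
  refine ⟨mem_filter.2 ⟨mem_univ _, ?_⟩, ?_⟩
  · simp only [Adj, cell_swap_succ_left hs hu, cell_swap_self hs, cell_swap_succ_add_two hs]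
    exact ⟨hR, T.not_adj_of_lt ⟨by omega, by omega⟩ ⟨by omega, hn⟩ (by omega), hP⟩
  · simp only [contentStep, cell_swap_succ_left hs hu, cell_swap_self hs]
    linarith

/-- Here `u` and `u + 1` fill the two cells covered by `u + 2`, and exchanging them negates the
content step. -/
theorem sum_contentStep_join (hu : 1 ≤ u) (hn : u + 2 ≤ Y.card) :
    ∑ T : SYT Y with ¬T.Adj u (u + 1) ∧ T.Adj (u + 1) (u + 2) ∧ T.Adj u (u + 2),
      T.contentStep (u + 1) = 0 := by
  refine sum_eq_zero_of_neg_involution (fun T => T.swap u) (swap_swap · _) fun T hT => ?_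
  obtain ⟨hP, hQ, hR⟩ := (mem_filter.1 hT).2
  have hs := swappable_of_not_adj hu (by omega) hP
  have hpq := T.cell_ne ⟨hu, by omega⟩ ⟨by omega, by omega⟩ (show u ≠ u + 1 by omega)
  have := cellContent_add_cellContent_of_covBy' hR hQ hpq
  refine ⟨mem_filter.2 ⟨mem_univ _, ?_⟩, ?_⟩
  · simp only [Adj, cell_swap_self hs, cell_swap_succ hs, cell_swap_add_two hs hn]
    exact ⟨T.not_adj_of_lt ⟨hu, by omega⟩ ⟨by omega, by omega⟩ (by omega), hR, hQ⟩
  · simp only [contentStep, cell_swap_succ hs, cell_swap_add_two hs hn]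
    linarith

/-- Exchanging first `u + 1, u + 2` and then `u, u + 1` moves a domino `u, u + 1` with `u + 2`
elsewhere to a domino `u + 1, u + 2` with `u` elsewhere. -/
theorem sum_contentStep_domino (hu : 1 ≤ u) (hn : u + 2 ≤ Y.card) :
    ∑ T : SYT Y with ¬T.Adj u (u + 1) ∧ T.Adj (u + 1) (u + 2) ∧ ¬T.Adj u (u + 2),
      T.contentStep (u + 1) =
    ∑ T : SYT Y with T.Adj u (u + 1) ∧ ¬T.Adj (u + 1) (u + 2) ∧ ¬T.Adj u (u + 2),
      T.contentStep u := by
  have hu₀ : u ∈ Set.Icc 1 Y.card := ⟨hu, by omega⟩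
  have hu₁ : u + 1 ∈ Set.Icc 1 Y.card := ⟨by omega, by omega⟩
  have hu₂ : u + 2 ∈ Set.Icc 1 Y.card := ⟨by omega, hn⟩
  have forward : ∀ T : SYT Y, ¬T.Adj u (u + 1) ∧ T.Adj (u + 1) (u + 2) ∧ ¬T.Adj u (u + 2) →
      let T' := (T.swap u).swap (u + 1)
      (T'.Adj u (u + 1) ∧ ¬T'.Adj (u + 1) (u + 2) ∧ ¬T'.Adj u (u + 2)) ∧
        T'.contentStep u = T.contentStep (u + 1) := by
    rintro T ⟨hP, hQ, hR⟩
    have hs₁ := swappable_of_not_adj hu (by omega) hP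
    have hs₂ : (T.swap u).Swappable (u + 1) := swappable_of_not_adj (by omega) hn
      (by simpa only [Adj, cell_swap_succ hs₁, cell_swap_add_two hs₁ hn] using hR)
    simp only [Adj, contentStep, cell_swap_succ_left hs₂ hu, cell_swap_self hs₂,
      cell_swap_succ_add_two hs₂, cell_swap_self hs₁, cell_swap_succ hs₁, cell_swap_add_two hs₁ hn,
      and_true]
    exact ⟨hQ, T.not_adj_of_lt hu₀ hu₂ (by omega), T.not_adj_of_lt hu₀ hu₁ (by omega)⟩
  have backward : ∀ T : SYT Y, T.Adj u (u + 1) ∧ ¬T.Adj (u + 1) (u + 2) ∧ ¬T.Adj u (u + 2) →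
      let T' := (T.swap (u + 1)).swap u
      ¬T'.Adj u (u + 1) ∧ T'.Adj (u + 1) (u + 2) ∧ ¬T'.Adj u (u + 2) := by
    rintro T ⟨hP, hQ, hR⟩
    have hs₁ := swappable_of_not_adj (by omega) hn hQ
    have hs₂ : (T.swap (u + 1)).Swappable u := swappable_of_not_adj hu (by omega)
      (by simpa only [Adj, cell_swap_succ_left hs₁ hu, cell_swap_self hs₁] using hR)
    simp only [Adj, cell_swap_self hs₂, cell_swap_succ hs₂, cell_swap_add_two hs₂ hn,
      cell_swap_succ_left hs₁ hu, cell_swap_self hs₁, cell_swap_succ_add_two hs₁]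
    exact ⟨T.not_adj_of_lt hu₀ hu₂ (by omega), hP, T.not_adj_of_lt hu₁ hu₂ (by omega)⟩
  refine sum_nbij' (fun T => (T.swap u).swap (u + 1)) (fun T => (T.swap (u + 1)).swap u)
    (fun T hT => ?_) (fun T hT => ?_) (fun T _ => by simp only [swap_swap])
    (fun T _ => by simp only [swap_swap]) (fun T hT => ?_)
  · exact mem_filter.2 ⟨mem_univ _, (forward T (mem_filter.1 hT).2).1⟩
  · exact mem_filter.2 ⟨mem_univ _, backward T (mem_filter.1 hT).2⟩
  · exact ((forward T (mem_filter.1 hT).2).2).symm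

theorem sum_adjStep_succ (hu : 1 ≤ u) (hn : u + 2 ≤ Y.card) :
    ∑ T : SYT Y, T.adjStep (u + 1) = ∑ T : SYT Y, T.adjStep u := by
  have split₀ : ∀ T : SYT Y, T.adjStep u =
      ((if T.Adj u (u + 1) ∧ T.Adj (u + 1) (u + 2) then T.contentStep u else 0) +
        if T.Adj u (u + 1) ∧ ¬T.Adj (u + 1) (u + 2) ∧ T.Adj u (u + 2) then T.contentStep u
        else 0) +
        if T.Adj u (u + 1) ∧ ¬T.Adj (u + 1) (u + 2) ∧ ¬T.Adj u (u + 2) then T.contentStep u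
        else 0 := fun T => by
    by_cases hP : T.Adj u (u + 1) <;> by_cases hQ : T.Adj (u + 1) (u + 2) <;>
      by_cases hR : T.Adj u (u + 2) <;> simp [adjStep, hP, hQ, hR]
  have split₁ : ∀ T : SYT Y, T.adjStep (u + 1) =
      ((if T.Adj u (u + 1) ∧ T.Adj (u + 1) (u + 2) then T.contentStep (u + 1) else 0) +
        if ¬T.Adj u (u + 1) ∧ T.Adj (u + 1) (u + 2) ∧ T.Adj u (u + 2) then T.contentStep (u + 1)
        else 0) +
        if ¬T.Adj u (u + 1) ∧ T.Adj (u + 1) (u + 2) ∧ ¬T.Adj u (u + 2) then T.contentStep (u + 1)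
        else 0 := fun T => by
    by_cases hP : T.Adj u (u + 1) <;> by_cases hQ : T.Adj (u + 1) (u + 2) <;>
      by_cases hR : T.Adj u (u + 2) <;> simp [adjStep, hP, hQ, hR]
  simp only [Fintype.sum_congr _ _ split₀, Fintype.sum_congr _ _ split₁, sum_add_distrib,
    ← sum_filter, sum_contentStep_fork hu hn, sum_contentStep_join hu hn,
    sum_contentStep_domino hu hn]
  congr 2
  exact sum_congr rfl fun T hT =>
    T.contentStep_succ_eq hu hn (mem_filter.1 hT).2.1 (mem_filter.1 hT).2.2

theorem sum_adjStep_eq (hu : 1 ≤ u) (hn : u + 1 ≤ Y.card) :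
    ∑ T : SYT Y, T.adjStep u = ∑ T : SYT Y, T.adjStep 1 := by
  induction u with
  | zero => omega
  | succ k ih =>
    rcases Nat.eq_zero_or_pos k with rfl | hk
    · rfl
    · rw [sum_adjStep_succ hk (by omega), ih hk (by omega)]

theorem sum_range_cellContent (T : SYT Y) :
    ∑ i ∈ range Y.card, cellContent (T.cell (i + 1)) = Y.contentSum := by
  refine sum_nbij' (fun i => T.cell (i + 1)) (fun c => T.entry c.1 c.2 - 1) (fun i hi => ?_)
    (fun c hc => ?_) (fun i hi => ?_) (fun c hc => ?_) fun _ _ => rfl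
  · exact T.cell_mem ⟨by omega, by simpa using hi⟩
  · have := T.bijOn.mapsTo hc
    simp only [Set.mem_Icc] at this
    rw [mem_range]
    omega
  · have := T.entry_cell (v := i + 1) ⟨by omega, by simpa using hi⟩
    omega
  · have := (T.bijOn.mapsTo hc).1
    simp only [Nat.sub_add_cancel this]
    exact T.cell_entry hc

theorem sum_range_contentStep (T : SYT Y) :
    ∑ i ∈ range (Y.card - 1), ((Y.card : ℤ) - 1 - i) * T.contentStep (i + 1) = Y.contentSum := by
  rcases Nat.eq_zero_or_pos Y.card with h | h
  · rw [← T.sum_range_cellContent, h]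
    simp
  have h₁ : cellContent (T.cell 1) = 0 := by rw [T.cell_one h]; rfl
  have hsplit : ∑ i ∈ range Y.card, cellContent (T.cell (i + 1)) =
      ∑ i ∈ range (Y.card - 1), cellContent (T.cell (i + 1 + 1)) := by
    conv_lhs => rw [← Nat.sub_add_cancel h, sum_range_succ', zero_add, h₁, add_zero]
  have := sum_range_sub_mul_sub (fun i => cellContent (T.cell (i + 1))) (Y.card - 1)
  simp only [zero_add, h₁, mul_zero, sub_zero, Nat.cast_sub h, Nat.cast_one] at this
  rw [← T.sum_range_cellContent, hsplit]
  exact this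

theorem sum_maj (Y : YoungDiagram) :
    ∑ T : SYT Y, (T.maj : ℤ) = ∑ u ∈ range Y.card, (u : ℤ) * #{T : SYT Y | T.IsDescent u} := by
  simp only [maj, descents, sum_filter, Nat.cast_sum]
  rw [sum_comm]
  simp [sum_ite, mul_comm]

theorem four_mul_sum_maj (Y : YoungDiagram) :
    4 * ∑ T : SYT Y, (T.maj : ℤ) =
      Fintype.card (SYT Y) * (Y.card * (Y.card - 1) - 2 * Y.contentSum) := by
  set E := ∑ T : SYT Y, T.adjStep 1
  have hmaj : 2 * ∑ T : SYT Y, (T.maj : ℤ) =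
      (Fintype.card (SYT Y) - E) * ∑ u ∈ range Y.card, (u : ℤ) := by
    rw [sum_maj, mul_sum, mul_sum]
    refine sum_congr rfl fun u hu => ?_
    have hun : u < Y.card := mem_range.1 hu
    rcases Nat.eq_zero_or_pos u with rfl | hu₁
    · simp
    · rw [mul_left_comm, card_isDescent hu₁ hun, sum_adjStep_eq hu₁ hun]
      ring
  have hcontent : Fintype.card (SYT Y) * Y.contentSum =
      E * ∑ i ∈ range (Y.card - 1), ((Y.card : ℤ) - 1 - i) := by
    calc (Fintype.card (SYT Y) : ℤ) * Y.contentSum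
        = ∑ T : SYT Y, ∑ i ∈ range (Y.card - 1),
            ((Y.card : ℤ) - 1 - i) * T.contentStep (i + 1) := by
          simp only [sum_range_contentStep, sum_const, card_univ, nsmul_eq_mul]
      _ = ∑ i ∈ range (Y.card - 1), ((Y.card : ℤ) - 1 - i) * E := by
          rw [sum_comm]
          refine sum_congr rfl fun i hi => ?_
          have hi : i + 1 < Y.card := by rw [mem_range] at hi; omega
          rw [← mul_sum, sum_contentStep (by omega) hi, sum_adjStep_eq (by omega) hi]
      _ = E * ∑ i ∈ range (Y.card - 1), ((Y.card : ℤ) - 1 - i) := by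
          rw [← sum_mul, mul_comm]
  linear_combination 2 * hmaj + (Fintype.card (SYT Y) - E) * two_mul_sum_range Y.card +
    2 * hcontent + E * two_mul_sum_range_pred Y.card

theorem sytExpect_maj (Y : YoungDiagram) :
    sytExpect Y (fun T => (T.maj : ℝ)) = ((Y.card.choose 2 : ℝ) - Y.contentSum) / 2 := by
  have hf : (0 : ℝ) < Fintype.card (SYT Y) := by exact_mod_cast Fintype.card_pos
  have h : (4 : ℝ) * ∑ T : SYT Y, (T.maj : ℝ) =
      Fintype.card (SYT Y) * (Y.card * (Y.card - 1) - 2 * Y.contentSum) := by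
    exact_mod_cast four_mul_sum_maj Y
  rw [sytExpect, finsum_eq_sum_of_fintype, Nat.card_eq_fintype_card, Nat.cast_choose_two,
    div_eq_iff hf.ne']
  linear_combination h / 4

end SYT

theorem expected_maj_lower_bound_general (n m : ℕ) (hmn : m < n)
    (Y : YoungDiagram) (hY : Y.card = n) (hrow : Y.rowLen 0 ≤ m) :
    (1 / 2) * ((n.choose 2 : ℝ) - (m.choose 2 : ℝ) - ((n - m).choose 2 : ℝ)) ≤
      sytExpect Y (fun T => (T.maj : ℝ)) := by
  have hcontent :
      (2 * Y.contentSum : ℝ) ≤ m * ((m : ℝ) - 1) + ((n : ℝ) - m) * ((n : ℝ) - m - 1) := by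
    exact_mod_cast hY ▸ Y.two_mul_contentSum_le hrow
  rw [SYT.sytExpect_maj, hY, Nat.cast_choose_two, Nat.cast_choose_two, Nat.cast_choose_two,
    Nat.cast_sub hmn.le]
  linarith

/-- Let `n` and `m` be positive integers with `n/2 ≤ m < n`, and let
`λ` be a partition of `n` with `λ₁ ≤ m`.  Then the expected major index of a uniformly
random standard Young tableau of shape `λ` satisfies
`E_λ[maj] ≥ (1/2)·[C(n,2) − C(m,2) − C(n−m,2)]`. -/
theorem expected_maj_lower_bound (n m : ℕ) (hn : 0 < n) (hm : 0 < m)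
    (hnm : n ≤ 2 * m) (hmn : m < n)
    (Y : YoungDiagram) (hY : Y.card = n) (hrow : Y.rowLen 0 ≤ m) :
    (1 / 2) * ((n.choose 2 : ℝ) - (m.choose 2 : ℝ) - ((n - m).choose 2 : ℝ)) ≤
      sytExpect Y (fun T => (T.maj : ℝ)) :=
  expected_maj_lower_bound_general n m hmn Y hY hrow
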